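/- Let E be a real inner product space, let λ > 0, and let v ∈ E. Define shrink₂(v, λ) = (max(‖v‖ − λ, 0)/‖v‖)·v if v ≠ 0 and shrink₂(v, λ) = 0 if v = 0. Then shrink₂(v, λ) is the unique minimizer over x ∈ E of the function x ↦ λ‖x‖ + (1/2)‖x − v‖². -/

import Mathlib

open RealInnerProductSpace


/-- The `shrink₂` operator is the proximal operator of the norm: the point
`w = (max(‖v‖-λ,0)/‖v‖)•v` (and `w = 0` if `v = 0`) is the unique minimizer of
`x ↦ λ‖x‖ + (1/2)‖x - v‖²`. -/
theorem stmt_6 {E : Type*} [NormedAddCommGroup E] [InnerProductSpace ℝ E]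
    (l : ℝ) (hl : 0 < l) (v : E) (w : E)
    (hw₁ : v ≠ 0 → w = (max (‖v‖ - l) 0 / ‖v‖) • v)
    (hw₂ : v = 0 → w = 0) :
    (∀ x : E, l * ‖w‖ + (1 / 2) * ‖w - v‖ ^ 2 ≤ l * ‖x‖ + (1 / 2) * ‖x - v‖ ^ 2) ∧
      ∀ x : E, x ≠ w →
        l * ‖w‖ + (1 / 2) * ‖w - v‖ ^ 2 < l * ‖x‖ + (1 / 2) * ‖x - v‖ ^ 2 := by
  have key : ∀ x : E, x ≠ w →
      l * ‖w‖ + (1 / 2) * ‖w - v‖ ^ 2 < l * ‖x‖ + (1 / 2) * ‖x - v‖ ^ 2 := by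
    intro x hx
    by_cases hv : v = 0
    · subst hv
      rw [hw₂ rfl] at hx ⊢
      simp only [sub_zero, norm_zero]
      have h1 : 0 < ‖x‖ := norm_pos_iff.mpr hx
      nlinarith
    · have hw := hw₁ hv
      have hv0 : 0 < ‖v‖ := norm_pos_iff.mpr hv
      have hcs : (inner ℝ x v : ℝ) ≤ ‖x‖ * ‖v‖ := real_inner_le_norm x v
      have hxx : ‖x - v‖ ^ 2 = ‖x‖ ^ 2 - 2 * (inner ℝ x v : ℝ) + ‖v‖ ^ 2 := by
        rw [@norm_sub_sq_real]
      by_cases hle : ‖v‖ ≤ l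
      · have hm : max (‖v‖ - l) 0 = 0 := max_eq_right (by linarith)
        rw [hm] at hw
        simp only [zero_div, zero_smul] at hw
        rw [hw] at hx ⊢
        simp only [norm_zero, zero_sub, norm_neg]
        have h1 : 0 < ‖x‖ := norm_pos_iff.mpr hx
        rw [hxx]
        nlinarith
      · push_neg at hle
        have hm : max (‖v‖ - l) 0 = ‖v‖ - l := max_eq_left (by linarith)
        rw [hm] at hw
        have hpos : 0 < (‖v‖ - l) / ‖v‖ := div_pos (by linarith) hv0
        have hnw : ‖w‖ = ‖v‖ - l := by
          rw [hw, norm_smul, Real.norm_eq_abs, abs_of_pos hpos]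
          field_simp
        have hwv : ‖w - v‖ = l := by
          have : w - v = ((‖v‖ - l) / ‖v‖ - 1) • v := by
            rw [hw, sub_smul, one_smul]
          rw [this, norm_smul, Real.norm_eq_abs]
          have h2 : (‖v‖ - l) / ‖v‖ - 1 = -l / ‖v‖ := by field_simp; ring
          rw [h2, abs_div, abs_neg, abs_of_pos hl, abs_of_pos hv0]
          field_simp
        rcases lt_or_eq_of_le hcs with h | h
        · rw [hxx, hnw, hwv]
          nlinarith [sq_nonneg (‖x‖ - (‖v‖ - l))]
        · have heq : ‖v‖ • x = ‖x‖ • v := inner_eq_norm_mul_iff_real.mp h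
          have hne : ‖x‖ ≠ ‖v‖ - l := by
            intro he
            apply hx
            have hxeq : x = (‖x‖ / ‖v‖) • v := by
              rw [div_eq_inv_mul, mul_smul, ← heq, ← mul_smul,
                inv_mul_cancel₀ (ne_of_gt hv0), one_smul]
            rw [hxeq, he, hw]
          have h2 : 0 < (‖x‖ - (‖v‖ - l)) ^ 2 := by
            have := sub_ne_zero.mpr hne
            positivity
          rw [hxx, hnw, hwv]
          nlinarith
  refine ⟨fun x => ?_, key⟩
  by_cases hx : x = w
  · rw [hx]
  · exact le_of_lt (key x hx)
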